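/- arXiv:math/0701606 — 4 statements merged into one kernel-verified Lean document; each statement's English description precedes it below -/
import Mathlib

section
/- Under the hypotheses of the asymptotic integration lemma (Y' = A(t)Y, Y(0)=I, ∫_0^∞‖A‖ dt < ∞, L = lim_{t→∞} Y(t)), the error satisfies the quantitative bound ‖Y(t) - L‖ ≤ C ∫_t^∞ ‖A(s)‖ ds for all t ≥ 0, where C = exp(∫_0^∞ ‖A(s)‖ ds). -/
/-!
By Grönwall's inequality `‖Y t‖ ≤ ‖Y 0‖ exp (∫₀ᵗ ‖A‖) ≤ C`, so the derivative `A Y` is bounded by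
the integrable function `C ‖A‖`. Hence `L - Y t = ∫ₜ^∞ A Y`, whose norm is at most
`C ∫ₜ^∞ ‖A‖`.
-/

open MeasureTheory Filter Set Topology Real

variable {E : Type*} [NormedAddCommGroup E] [NormedSpace ℝ E]

theorem ContinuousOn.hasDerivWithinAt_intervalIntegral_Ici [CompleteSpace E] {g : ℝ → E}
    {l b x : ℝ} (hg : ContinuousOn g (Icc l b)) (hx : x ∈ Ico l b) :
    HasDerivWithinAt (fun u => ∫ s in l..u, g s) (g x) (Ici x) x := by
  have hmem : Icc l b ∈ 𝓝[>] x := Icc_mem_nhdsGT_of_mem hx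
  exact intervalIntegral.integral_hasDerivWithinAt_right
    ((hg.mono (Icc_subset_Icc_right hx.2.le)).intervalIntegrable_of_Icc hx.1)
    ((hg.stronglyMeasurableAtFilter_nhdsWithin measurableSet_Icc x).filter_mono
      (nhdsWithin_le_of_mem hmem))
    ((hg x (Ico_subset_Icc_self hx)).mono_of_mem_nhdsWithin hmem)

theorem norm_le_mul_exp_integral_of_norm_deriv_le {f f' : ℝ → E} {a : ℝ → ℝ} {l b : ℝ}
    (hlb : l ≤ b) (ha : ContinuousOn a (Icc l b)) (hf : ContinuousOn f (Icc l b))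
    (hf' : ∀ x ∈ Ico l b, HasDerivWithinAt f (f' x) (Ici x) x)
    (bound : ∀ x ∈ Ico l b, ‖f' x‖ ≤ a x * ‖f x‖) :
    ‖f b‖ ≤ ‖f l‖ * exp (∫ s in l..b, a s) := by
  set g : ℝ → ℝ := fun x => ∫ s in l..x, a s
  have hg : ContinuousOn g (Icc l b) := by
    rw [← uIcc_of_le hlb]
    exact intervalIntegral.continuousOn_primitive_interval (uIcc_of_le hlb ▸ ha.integrableOn_Icc)
  -- the strict fence `(‖f l‖ + η) exp (g x + η (x - l))`, then `η → 0`
  have fence : ∀ η > 0, ‖f b‖ ≤ (‖f l‖ + η) * exp (g b + η * (b - l)) := by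
    intro η hη
    refine image_norm_le_of_norm_deriv_right_lt_deriv_boundary' hf hf'
      (B := fun x => (‖f l‖ + η) * exp (g x + η * (x - l)))
      (B' := fun x => (a x + η) * ((‖f l‖ + η) * exp (g x + η * (x - l)))) ?_ ?_ ?_ ?_
      ⟨hlb, le_rfl⟩
    · simp [hη.le, g]
    · fun_prop
    · intro x hx
      have hlin : HasDerivWithinAt (fun y => η * (y - l)) η (Ici x) x := by
        simpa using (((hasDerivAt_id x).sub_const l).const_mul η).hasDerivWithinAt
      have hexp : HasDerivWithinAt (fun y => g y + η * (y - l)) (a x + η) (Ici x) x :=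
        (ha.hasDerivWithinAt_intervalIntegral_Ici hx).add hlin
      exact (hexp.exp.const_mul (‖f l‖ + η)).congr_deriv (by ring)
    · intro x hx hfx
      rw [← hfx]
      have hpos : 0 < ‖f x‖ := hfx ▸ by positivity
      exact (bound x hx).trans_lt (mul_lt_mul_of_pos_right (lt_add_of_pos_right _ hη) hpos)
  have hlim : Tendsto (fun η => (‖f l‖ + η) * exp (g b + η * (b - l))) (𝓝[>] 0)
      (𝓝 (‖f l‖ * exp (g b))) := by
    have : Continuous fun η => (‖f l‖ + η) * exp (g b + η * (b - l)) := by fun_prop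
    simpa using this.continuousWithinAt (s := Ioi 0) (x := 0) |>.tendsto
  exact ge_of_tendsto hlim (eventually_nhdsWithin_of_forall fence)

theorem intervalIntegral_le_setIntegral_Ici {f : ℝ → ℝ} {a b : ℝ} (hab : a ≤ b)
    (hf : IntegrableOn f (Ici a)) (hf0 : ∀ x ∈ Ici a, 0 ≤ f x) :
    ∫ x in a..b, f x ≤ ∫ x in Ici a, f x := by
  rw [intervalIntegral.integral_of_le hab]
  exact setIntegral_mono_set hf (ae_restrict_of_forall_mem measurableSet_Ici hf0)
    (Ioc_subset_Icc_self.trans Icc_subset_Ici_self).eventuallyLE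

theorem norm_sub_le_integral_of_tendsto_of_norm_deriv_le [CompleteSpace E] {f f' : ℝ → E}
    {φ : ℝ → ℝ} {L : E} {t : ℝ}
    (hderiv : ∀ s ∈ Ici t, HasDerivAt f (f' s) s)
    (hf' : AEStronglyMeasurable f' (volume.restrict (Ioi t)))
    (bound : ∀ s ∈ Ioi t, ‖f' s‖ ≤ φ s) (hφ : IntegrableOn φ (Ioi t))
    (hlim : Tendsto f atTop (𝓝 L)) :
    ‖f t - L‖ ≤ ∫ s in Ioi t, φ s := by
  have bound_ae := ae_restrict_of_forall_mem (μ := volume) measurableSet_Ioi bound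
  rw [norm_sub_rev, ← integral_Ioi_of_hasDerivAt_of_tendsto' hderiv (hφ.mono' hf' bound_ae) hlim]
  exact norm_integral_le_of_norm_le hφ bound_ae

/-- Quantitative error bound in the asymptotic integration lemma: with
`Y' = A(t)Y`, `Y(0) = I`, `∫_0^∞ ‖A‖ dt < ∞` and `L = lim_{t→∞} Y(t)`, one has
`‖Y(t) - L‖ ≤ C ∫_t^∞ ‖A(s)‖ ds` for all `t ≥ 0`, where `C = exp(∫_0^∞ ‖A(s)‖ ds)`. -/
theorem asymptotic_integration_error_bound (m : ℕ)
    (A Y : ℝ → (EuclideanSpace ℂ (Fin m) →L[ℂ] EuclideanSpace ℂ (Fin m)))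
    (hAcont : ContinuousOn A (Set.Ici 0))
    (hAint : IntegrableOn (fun t => ‖A t‖) (Set.Ici (0:ℝ)))
    (hY : ∀ t ∈ Set.Ici (0:ℝ), HasDerivAt Y (A t ∘L Y t) t)
    (hY0 : Y 0 = ContinuousLinearMap.id ℂ (EuclideanSpace ℂ (Fin m)))
    (L : EuclideanSpace ℂ (Fin m) →L[ℂ] EuclideanSpace ℂ (Fin m))
    (hL : Tendsto Y atTop (nhds L)) :
    ∀ t ≥ (0:ℝ), ‖Y t - L‖ ≤
      Real.exp (∫ s in Set.Ici (0:ℝ), ‖A s‖) * ∫ s in Set.Ici t, ‖A s‖ := by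
  intro t ht
  set C := exp (∫ s in Ici (0:ℝ), ‖A s‖)
  have hYcont : ContinuousOn Y (Ici 0) := fun s hs => (hY s hs).continuousAt.continuousWithinAt
  have hYle : ∀ s ∈ Ici (0:ℝ), ‖Y s‖ ≤ C := fun s hs => calc
    ‖Y s‖ ≤ ‖Y 0‖ * exp (∫ r in (0:ℝ)..s, ‖A r‖) :=
      norm_le_mul_exp_integral_of_norm_deriv_le hs (hAcont.norm.mono Icc_subset_Ici_self)
        (hYcont.mono Icc_subset_Ici_self) (fun x hx => (hY x hx.1).hasDerivWithinAt)
        (fun x _ => ContinuousLinearMap.opNorm_comp_le _ _)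
    _ ≤ 1 * C := by
      gcongr
      · exact hY0 ▸ ContinuousLinearMap.norm_id_le
      · exact exp_le_exp.2 (intervalIntegral_le_setIntegral_Ici hs hAint fun _ _ => norm_nonneg _)
    _ = C := one_mul C
  have hIoi : Ioi t ⊆ Ici 0 := Ioi_subset_Ici_self.trans (Ici_subset_Ici.2 ht)
  rw [integral_Ici_eq_integral_Ioi, ← integral_const_mul]
  refine norm_sub_le_integral_of_tendsto_of_norm_deriv_le (fun s hs => hY s (ht.trans hs))
    (((hAcont.clm_comp hYcont).mono hIoi).aestronglyMeasurable measurableSet_Ioi) (fun s hs => ?_)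
    ((hAint.mono_set hIoi).const_mul C) hL
  calc ‖A s ∘L Y s‖ ≤ ‖A s‖ * ‖Y s‖ := ContinuousLinearMap.opNorm_comp_le _ _
    _ ≤ C * ‖A s‖ := by rw [mul_comm]; gcongr; exact hYle s (hIoi hs)
end

section
/- For g ∈ 𝒮(ℝⁿ) with n ≥ 2, the function I(τ) = ∫_{ℝⁿ} e^{iτ|ξ|} |ξ| |ĝ(ξ)|² dξ satisfies |I(τ)| ≤ C(1+|τ|)^{-2} for all τ ∈ ℝ, for some constant C. -/
open MeasureTheory Complex Set Filter
open scoped FourierTransform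

lemma expderiv (τ : ℝ) (r : ℝ) :
    HasDerivAt (fun r : ℝ => Complex.exp (Complex.I * τ * r)) (Complex.I * τ * Complex.exp (Complex.I * τ * r)) r := by
  have h1 : HasDerivAt (fun r : ℝ => Complex.I * τ * (r : ℂ)) (Complex.I * τ) r := by
    simpa using (Complex.ofRealCLM.hasDerivAt (x := r)).const_mul (Complex.I * τ)
  simpa [mul_comm] using h1.cexp

lemma osc_integrable {k : ℝ → ℂ} (τ : ℝ) (hk : IntegrableOn k (Ioi 0))
    : IntegrableOn (fun r : ℝ => Complex.exp (Complex.I * τ * r) * k r) (Ioi 0) := by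
  apply hk.bdd_mul
  · exact (Complex.continuous_exp.comp (by continuity)).aestronglyMeasurable
  · refine ae_of_all _ (fun r => ?_ : ∀ r : ℝ, ‖Complex.exp (Complex.I * τ * r)‖ ≤ 1)
    simp [Complex.norm_exp]

lemma ibp_step (τ : ℝ) (k0 k1 : ℝ → ℂ)
    (h01 : ∀ r, HasDerivAt k0 (k1 r) r) (hk00 : k0 0 = 0)
    (i0 : IntegrableOn k0 (Ioi 0)) (i1 : IntegrableOn k1 (Ioi 0))
    (l0 : Tendsto k0 atTop (nhds 0)) :
    (Complex.I * τ) * ∫ r in Ioi (0:ℝ), Complex.exp (Complex.I * τ * r) * k0 r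
      = - ∫ r in Ioi (0:ℝ), Complex.exp (Complex.I * τ * r) * k1 r := by
  set e : ℝ → ℂ := fun r => Complex.exp (Complex.I * τ * r) with he
  have hu : ∀ r ∈ Ici (0:ℝ), HasDerivAt (fun r => e r * k0 r)
      ((Complex.I * τ) * (e r * k0 r) + e r * k1 r) r := by
    intro r _
    have := (expderiv τ r).mul (h01 r)
    exact this.congr_deriv (by simp only [he]; ring)
  have hie0 := osc_integrable τ i0
  have hie1 := osc_integrable τ i1
  have hint : IntegrableOn (fun r => (Complex.I * τ) * (e r * k0 r) + e r * k1 r) (Ioi 0) :=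
    (hie0.const_mul _).add hie1
  have htend : Tendsto (fun r => e r * k0 r) atTop (nhds 0) := by
    rw [tendsto_zero_iff_norm_tendsto_zero]
    rw [tendsto_zero_iff_norm_tendsto_zero] at l0
    refine l0.congr (fun r => ?_)
    simp [he, Complex.norm_exp]
  have key := integral_Ioi_of_hasDerivAt_of_tendsto' hu hint htend
  rw [MeasureTheory.integral_add (hie0.const_mul _) hie1, integral_const_mul] at key
  simp only [he] at key ⊢
  rw [hk00] at key
  simp at key
  linear_combination key

lemma ibp_double (τ : ℝ) (hτ : τ ≠ 0) (k0 k1 k2 : ℝ → ℂ)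
    (h01 : ∀ r, HasDerivAt k0 (k1 r) r) (h12 : ∀ r, HasDerivAt k1 (k2 r) r)
    (hk00 : k0 0 = 0) (hk10 : k1 0 = 0)
    (i0 : IntegrableOn k0 (Ioi 0)) (i1 : IntegrableOn k1 (Ioi 0)) (i2 : IntegrableOn k2 (Ioi 0))
    (l0 : Tendsto k0 atTop (nhds 0)) (l1 : Tendsto k1 atTop (nhds 0)) :
    ∫ r in Ioi (0:ℝ), Complex.exp (Complex.I * τ * r) * k0 r
      = (-1/(τ^2) : ℂ) * ∫ r in Ioi (0:ℝ), Complex.exp (Complex.I * τ * r) * k2 r := by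
  have e1 := ibp_step τ k0 k1 h01 hk00 i0 i1 l0
  have e2 := ibp_step τ k1 k2 h12 hk10 i1 i2 l1
  have hτ' : (τ:ℂ) ≠ 0 := by exact_mod_cast hτ
  have hI : (Complex.I * τ) ≠ 0 := by simp [Complex.I_ne_zero, hτ']
  field_simp at e1 e2 ⊢
  have hI2 : Complex.I * Complex.I = -1 := Complex.I_mul_I
  linear_combination e2 - (Complex.I*(τ:ℂ))*e1
    + ((τ:ℂ)^2 * ∫ r in Ioi (0:ℝ), Complex.exp (Complex.I * τ * r) * k0 r) * hI2

section Ray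
variable {E : Type*} [NormedAddCommGroup E] [NormedSpace ℝ E]

lemma line_deriv (ω : E) (r : ℝ) : HasDerivAt (fun r : ℝ => r • ω) ω r := by
  simpa using (hasDerivAt_id r).smul_const ω

lemma ray1 {P : E → ℂ} (hP : ContDiff ℝ ((⊤:ℕ∞) : WithTop ℕ∞) P) (ω : E) (r : ℝ) :
    HasDerivAt (fun r : ℝ => P (r • ω)) (fderiv ℝ P (r • ω) ω) r :=
  ((hP.differentiable (by simp) (r • ω)).hasFDerivAt).comp_hasDerivAt r (line_deriv ω r)

lemma ray2 {P : E → ℂ} (hP : ContDiff ℝ ((⊤:ℕ∞) : WithTop ℕ∞) P) (ω : E) (r : ℝ) :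
    HasDerivAt (fun r : ℝ => fderiv ℝ P (r • ω) ω)
      (fderiv ℝ (fderiv ℝ P) (r • ω) ω ω) r := by
  have hc : HasFDerivAt (fderiv ℝ P) (fderiv ℝ (fderiv ℝ P) (r • ω)) (r • ω) :=
    (((hP.fderiv_right (m := (⊤:ℕ∞)) (by simp)).differentiable (by simp)) (r • ω)).hasFDerivAt
  have h := (hc.clm_apply (hasFDerivAt_const ω (r • ω))).comp_hasDerivAt r (line_deriv ω r)
  simpa [Function.comp_def] using h

lemma nb1 {P : E → ℂ} (ξ ω : E) :
    ‖fderiv ℝ P ξ ω‖ ≤ ‖iteratedFDeriv ℝ 1 P ξ‖ * ‖ω‖ := by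
  have h1 : ‖fderiv ℝ P ξ‖ = ‖iteratedFDeriv ℝ 1 P ξ‖ := by
    rw [← norm_iteratedFDeriv_fderiv (n := 0), norm_iteratedFDeriv_zero]
  rw [← h1]
  exact (fderiv ℝ P ξ).le_opNorm ω

lemma nb2 {P : E → ℂ} (ξ ω : E) :
    ‖fderiv ℝ (fderiv ℝ P) ξ ω ω‖ ≤ ‖iteratedFDeriv ℝ 2 P ξ‖ * ‖ω‖ * ‖ω‖ := by
  have h1 : ‖fderiv ℝ (fderiv ℝ P) ξ‖ = ‖iteratedFDeriv ℝ 2 P ξ‖ := by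
    rw [← norm_iteratedFDeriv_fderiv (n := 1), ← norm_iteratedFDeriv_fderiv (n := 0),
      norm_iteratedFDeriv_zero]
  calc ‖fderiv ℝ (fderiv ℝ P) ξ ω ω‖ ≤ ‖fderiv ℝ (fderiv ℝ P) ξ ω‖ * ‖ω‖ :=
        (fderiv ℝ (fderiv ℝ P) ξ ω).le_opNorm ω
    _ ≤ (‖fderiv ℝ (fderiv ℝ P) ξ‖ * ‖ω‖) * ‖ω‖ := by
        gcongr; exact (fderiv ℝ (fderiv ℝ P) ξ).le_opNorm ω
    _ = ‖iteratedFDeriv ℝ 2 P ξ‖ * ‖ω‖ * ‖ω‖ := by rw [h1]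

lemma cont1 {P : E → ℂ} (hP : ContDiff ℝ ((⊤:ℕ∞) : WithTop ℕ∞) P) (ω : E) :
    Continuous (fun ξ => fderiv ℝ P ξ ω) :=
  ((hP.fderiv_right (m := (⊤:ℕ∞)) (by simp)).continuous).clm_apply continuous_const

lemma cont2 {P : E → ℂ} (hP : ContDiff ℝ ((⊤:ℕ∞) : WithTop ℕ∞) P) (ω : E) :
    Continuous (fun ξ => fderiv ℝ (fderiv ℝ P) ξ ω ω) :=
  (((((hP.fderiv_right (m := (⊤:ℕ∞)) (by simp))).fderiv_right (m := (⊤:ℕ∞)) (by simp)).continuous).clm_apply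
    continuous_const).clm_apply continuous_const

end Ray

section Polar

open Metric MeasureTheory.Measure

variable {E : Type*} [NormedAddCommGroup E] [NormedSpace ℝ E] [MeasurableSpace E]
  [BorelSpace E] [FiniteDimensional ℝ E] [Nontrivial E]
  (μ : Measure E) [μ.IsAddHaarMeasure]

lemma comap_integrable {F : E → ℂ} (hF : Integrable F μ) :
    Integrable (fun x : ({(0:E)}ᶜ : Set E) => F x) (μ.comap Subtype.val) := by
  have he : MeasurableEmbedding (Subtype.val : ({(0:E)}ᶜ : Set E) → E) :=
    MeasurableEmbedding.subtype_coe (measurableSet_singleton (0:E)).compl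
  have : Integrable F ((μ.comap Subtype.val).map (Subtype.val : ({(0:E)}ᶜ : Set E) → E)) := by
    rw [map_comap_subtype_coe (measurableSet_singleton (0:E)).compl]
    exact hF.restrict
  exact he.integrable_map_iff.mp this

lemma prod_integrable {F : E → ℂ} (hF : Integrable F μ) :
    Integrable (fun p : sphere (0:E) 1 × Ioi (0:ℝ) => F ((p.2 : ℝ) • (p.1 : E)))
      (μ.toSphere.prod (volumeIoiPow (Module.finrank ℝ E - 1))) := by
  have h := μ.measurePreserving_homeomorphUnitSphereProd
  rw [← h.integrable_comp_emb (Homeomorph.measurableEmbedding _)]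
  have : (fun p : sphere (0:E) 1 × Ioi (0:ℝ) => F ((p.2 : ℝ) • (p.1 : E))) ∘
      (homeomorphUnitSphereProd E) = fun x : ({(0:E)}ᶜ : Set E) => F x := by
    ext x
    simp only [Function.comp_apply]
    congr 1
    exact congrArg Subtype.val ((homeomorphUnitSphereProd E).symm_apply_apply x) ▸
      (homeomorphUnitSphereProd_symm_apply_coe E ((homeomorphUnitSphereProd E) x))
  rw [this]
  exact comap_integrable μ hF

lemma polar_eq {F : E → ℂ} (hF : Integrable F μ) :
    ∫ x, F x ∂μ = ∫ ω : sphere (0:E) 1,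
      (∫ r in Ioi (0:ℝ), r ^ (Module.finrank ℝ E - 1) • F (r • (ω : E))) ∂μ.toSphere := by
  have h := μ.measurePreserving_homeomorphUnitSphereProd
  calc ∫ x, F x ∂μ = ∫ x : ({(0:E)}ᶜ : Set E), F x ∂(μ.comap Subtype.val) := by
        rw [integral_subtype_comap (measurableSet_singleton (0:E)).compl,
          restrict_compl_singleton]
    _ = ∫ p : sphere (0:E) 1 × Ioi (0:ℝ), F ((p.2 : ℝ) • (p.1 : E))
          ∂(μ.toSphere.prod (volumeIoiPow (Module.finrank ℝ E - 1))) := by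
        rw [← h.integral_comp (Homeomorph.measurableEmbedding _)
          (fun p : sphere (0:E) 1 × Ioi (0:ℝ) => F ((p.2 : ℝ) • (p.1 : E)))]
        apply integral_congr_ae
        filter_upwards with x
        congr 1
        exact congrArg Subtype.val ((homeomorphUnitSphereProd E).symm_apply_apply x) ▸
          (homeomorphUnitSphereProd_symm_apply_coe E ((homeomorphUnitSphereProd E) x))
    _ = ∫ ω : sphere (0:E) 1, (∫ r : Ioi (0:ℝ), F ((r : ℝ) • (ω : E))
          ∂(volumeIoiPow (Module.finrank ℝ E - 1))) ∂μ.toSphere :=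
        MeasureTheory.integral_prod _ (prod_integrable μ hF)
    _ = ∫ ω : sphere (0:E) 1,
          (∫ r in Ioi (0:ℝ), r ^ (Module.finrank ℝ E - 1) • F (r • (ω : E))) ∂μ.toSphere := by
        refine integral_congr_ae (Filter.Eventually.of_forall (fun ω => ?_))
        simp only [Measure.volumeIoiPow, ENNReal.ofReal]
        rw [integral_withDensity_eq_integral_smul
          ((measurable_subtype_coe.pow_const _).real_toNNReal) _,
          integral_subtype_comap measurableSet_Ioi
            (fun r : ℝ => (r ^ (Module.finrank ℝ E - 1)).toNNReal • F (r • (ω:E)))]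
        refine setIntegral_congr_fun measurableSet_Ioi (fun r hr => ?_)
        rw [NNReal.smul_def, Real.coe_toNNReal _ (pow_nonneg (le_of_lt hr) _)]

end Polar

section KFun
variable {E : Type*} [NormedAddCommGroup E] [NormedSpace ℝ E]

noncomputable def K0 (n : ℕ) (P : E → ℂ) (ω : E) (r : ℝ) : ℂ :=
  ((r^n : ℝ) : ℂ) * P (r • ω)

noncomputable def K1 (n : ℕ) (P : E → ℂ) (ω : E) (r : ℝ) : ℂ :=
  (((n : ℝ) * r^(n-1) : ℝ) : ℂ) * P (r • ω) + ((r^n : ℝ) : ℂ) * fderiv ℝ P (r • ω) ω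

noncomputable def K2 (n : ℕ) (P : E → ℂ) (ω : E) (r : ℝ) : ℂ :=
  (((n : ℝ) * ((n-1 : ℕ) : ℝ) * r^(n-2) : ℝ) : ℂ) * P (r • ω)
    + ((2 * (n : ℝ) * r^(n-1) : ℝ) : ℂ) * fderiv ℝ P (r • ω) ω
    + ((r^n : ℝ) : ℂ) * fderiv ℝ (fderiv ℝ P) (r • ω) ω ω

variable {n : ℕ} {P : E → ℂ} {ω : E}

lemma K0_deriv (hP : ContDiff ℝ ((⊤:ℕ∞) : WithTop ℕ∞) P) (r : ℝ) :
    HasDerivAt (K0 n P ω) (K1 n P ω r) r := by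
  have h1 : HasDerivAt (fun r : ℝ => ((r^n : ℝ) : ℂ)) (((n : ℝ) * r^(n-1) : ℝ) : ℂ) r := by
    exact_mod_cast (hasDerivAt_pow n r).ofReal_comp
  exact h1.mul (ray1 hP ω r)

lemma K1_deriv (hP : ContDiff ℝ ((⊤:ℕ∞) : WithTop ℕ∞) P) (r : ℝ) :
    HasDerivAt (K1 n P ω) (K2 n P ω r) r := by
  have h1 : HasDerivAt (fun r : ℝ => (((n : ℝ) * r^(n-1) : ℝ) : ℂ))
      (((n : ℝ) * (((n-1 : ℕ) : ℝ) * r^(n-1-1)) : ℝ) : ℂ) r := by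
    exact_mod_cast ((hasDerivAt_pow (n-1) r).const_mul (n:ℝ)).ofReal_comp
  have h2 : HasDerivAt (fun r : ℝ => ((r^n : ℝ) : ℂ)) (((n : ℝ) * r^(n-1) : ℝ) : ℂ) r := by
    exact_mod_cast (hasDerivAt_pow n r).ofReal_comp
  have t1 := h1.mul (ray1 hP ω r)
  have t2 := h2.mul (ray2 hP ω r)
  have := t1.add t2
  have hnn : n - 1 - 1 = n - 2 := by omega
  rw [hnn] at this
  refine this.congr_deriv ?_
  simp only [K2]
  push_cast
  ring

lemma K0_cont (hP : ContDiff ℝ ((⊤:ℕ∞) : WithTop ℕ∞) P) : Continuous (K0 n P ω) := by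
  apply Continuous.mul
  · exact Complex.continuous_ofReal.comp (continuous_pow n)
  · exact hP.continuous.comp (continuous_id.smul continuous_const)

lemma K1_cont (hP : ContDiff ℝ ((⊤:ℕ∞) : WithTop ℕ∞) P) : Continuous (K1 n P ω) := by
  apply Continuous.add
  · exact (Complex.continuous_ofReal.comp (continuous_const.mul (continuous_pow (n-1)))).mul
      (hP.continuous.comp (continuous_id.smul continuous_const))
  · exact (Complex.continuous_ofReal.comp (continuous_pow n)).mul
      ((cont1 hP ω).comp (continuous_id.smul continuous_const))

lemma K2_cont (hP : ContDiff ℝ ((⊤:ℕ∞) : WithTop ℕ∞) P) : Continuous (K2 n P ω) := by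
  refine Continuous.add (Continuous.add ?_ ?_) ?_
  · exact (Complex.continuous_ofReal.comp (continuous_const.mul (continuous_pow (n-2)))).mul
      (hP.continuous.comp (continuous_id.smul continuous_const))
  · exact (Complex.continuous_ofReal.comp (continuous_const.mul (continuous_pow (n-1)))).mul
      ((cont1 hP ω).comp (continuous_id.smul continuous_const))
  · exact (Complex.continuous_ofReal.comp (continuous_pow n)).mul
      ((cont2 hP ω).comp (continuous_id.smul continuous_const))

end KFun

section KBound
variable {E : Type*} [NormedAddCommGroup E] [NormedSpace ℝ E]
variable {n : ℕ} {P : E → ℂ} {ω : E}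

lemma pow_bound {M r : ℝ} (hM : 0 ≤ M) (hr : 0 ≤ r) {j : ℕ} (hj : j ≤ n) :
    r^j * (M * ((1+r)^(n+3))⁻¹) ≤ M * ((1+r)^3)⁻¹ := by
  have h1 : (0:ℝ) < 1 + r := by linarith
  have h2 : r^j ≤ (1+r)^n :=
    (pow_le_pow_left₀ hr (by linarith) j).trans (pow_le_pow_right₀ (by linarith) hj)
  rw [pow_add, mul_inv]
  calc r^j * (M * (((1+r)^n)⁻¹ * ((1+r)^3)⁻¹))
      = (r^j * ((1+r)^n)⁻¹) * (M * ((1+r)^3)⁻¹) := by ring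
    _ ≤ 1 * (M * ((1+r)^3)⁻¹) := by
        apply mul_le_mul_of_nonneg_right _ (by positivity)
        rw [← div_eq_mul_inv, div_le_one (by positivity)]
        exact h2
    _ = M * ((1+r)^3)⁻¹ := one_mul _

lemma K_bounds (hn : 2 ≤ n) (hω : ‖ω‖ = 1) {M : ℝ} (hM0 : 0 ≤ M)
    (h0 : ∀ ξ : E, ‖P ξ‖ ≤ M * ((1+‖ξ‖)^(n+3))⁻¹)
    (h1 : ∀ ξ : E, ‖iteratedFDeriv ℝ 1 P ξ‖ ≤ M * ((1+‖ξ‖)^(n+3))⁻¹)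
    (h2 : ∀ ξ : E, ‖iteratedFDeriv ℝ 2 P ξ‖ ≤ M * ((1+‖ξ‖)^(n+3))⁻¹)
    {r : ℝ} (hr : 0 ≤ r) :
    ‖K0 n P ω r‖ ≤ M * ((n:ℝ)+1)^2 * ((1+r)^3)⁻¹ ∧
    ‖K1 n P ω r‖ ≤ M * ((n:ℝ)+1)^2 * ((1+r)^3)⁻¹ ∧
    ‖K2 n P ω r‖ ≤ M * ((n:ℝ)+1)^2 * ((1+r)^3)⁻¹ := by
  have hnorm : ‖r • ω‖ = r := by
    rw [norm_smul, hω, mul_one, Real.norm_eq_abs, _root_.abs_of_nonneg hr]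
  set X : ℝ := M * ((1+r)^(n+3))⁻¹ with hX
  have hX0 : 0 ≤ X := by positivity
  set b : ℝ := ((1+r)^3)⁻¹ with hb
  have hb0 : 0 ≤ b := by positivity
  have pb : ‖P (r • ω)‖ ≤ X := by simpa [hnorm] using h0 (r • ω)
  have d1b : ‖fderiv ℝ P (r • ω) ω‖ ≤ X := by
    refine (nb1 _ _).trans ?_
    rw [hω, mul_one]
    simpa [hnorm] using h1 (r • ω)
  have d2b : ‖fderiv ℝ (fderiv ℝ P) (r • ω) ω ω‖ ≤ X := by
    refine (nb2 _ _).trans ?_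
    rw [hω, mul_one, mul_one]
    simpa [hnorm] using h2 (r • ω)
  have hA : r^(n-2) * X ≤ M * b := pow_bound hM0 hr (by omega)
  have hB : r^(n-1) * X ≤ M * b := pow_bound hM0 hr (by omega)
  have hC : r^n * X ≤ M * b := pow_bound hM0 hr le_rfl
  have hMb : 0 ≤ M * b := by positivity
  have key : M * b * ((n:ℝ)+1)^2 = M * ((n:ℝ)+1)^2 * b := by ring
  have hn0 : (0:ℝ) ≤ n := Nat.cast_nonneg n
  have hpow0 : ∀ j : ℕ, (0:ℝ) ≤ r ^ j := fun j => pow_nonneg hr j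
  refine ⟨?_, ?_, ?_⟩
  · have : ‖K0 n P ω r‖ ≤ r^n * X := by
      rw [K0, norm_mul, Complex.norm_real, Real.norm_eq_abs, _root_.abs_of_nonneg (hpow0 n)]
      exact mul_le_mul_of_nonneg_left pb (hpow0 n)
    refine this.trans (hC.trans ?_)
    rw [← key]
    nlinarith [hMb, mul_nonneg hMb hn0, mul_nonneg (mul_nonneg hMb hn0) hn0]
  · have : ‖K1 n P ω r‖ ≤ (n:ℝ) * (r^(n-1) * X) + r^n * X := by
      refine (norm_add_le _ _).trans ?_
      gcongr
      · rw [norm_mul, Complex.norm_real, Real.norm_eq_abs,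
          _root_.abs_of_nonneg (by positivity)]
        calc (n:ℝ) * r^(n-1) * ‖P (r • ω)‖ ≤ (n:ℝ) * r^(n-1) * X := by
              exact mul_le_mul_of_nonneg_left pb (by positivity)
          _ = (n:ℝ) * (r^(n-1) * X) := by ring
      · rw [norm_mul, Complex.norm_real, Real.norm_eq_abs, _root_.abs_of_nonneg (hpow0 n)]
        exact mul_le_mul_of_nonneg_left d1b (hpow0 n)
    refine this.trans ?_
    rw [← key]
    nlinarith [mul_le_mul_of_nonneg_left hB hn0, hC, mul_nonneg hMb hn0,
      mul_nonneg (mul_nonneg hMb hn0) hn0]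
  · have : ‖K2 n P ω r‖ ≤ (n:ℝ) * ((n:ℝ)) * (r^(n-2) * X)
        + 2 * (n:ℝ) * (r^(n-1) * X) + r^n * X := by
      refine ((norm_add_le _ _).trans (add_le_add_left (norm_add_le _ _) _)).trans ?_
      gcongr
      · rw [norm_mul, Complex.norm_real, Real.norm_eq_abs]
        have hcoef : |(n:ℝ) * ((n-1 : ℕ) : ℝ) * r^(n-2)| ≤ (n:ℝ) * (n:ℝ) * r^(n-2) := by
          rw [_root_.abs_of_nonneg (by positivity)]
          have h : ((n-1:ℕ):ℝ) ≤ (n:ℝ) := by exact_mod_cast Nat.sub_le n 1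
          exact mul_le_mul_of_nonneg_right (mul_le_mul_of_nonneg_left h hn0) (hpow0 (n-2))
        calc |(n:ℝ) * ((n-1 : ℕ) : ℝ) * r^(n-2)| * ‖P (r • ω)‖
            ≤ ((n:ℝ) * (n:ℝ) * r^(n-2)) * X := by
              apply mul_le_mul hcoef pb (norm_nonneg _) (by positivity)
          _ = (n:ℝ) * ((n:ℝ)) * (r^(n-2) * X) := by ring
      · rw [norm_mul, Complex.norm_real, Real.norm_eq_abs, _root_.abs_of_nonneg (by positivity)]
        calc 2 * (n:ℝ) * r^(n-1) * ‖fderiv ℝ P (r • ω) ω‖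
            ≤ 2 * (n:ℝ) * r^(n-1) * X := mul_le_mul_of_nonneg_left d1b (by positivity)
          _ = 2 * (n:ℝ) * (r^(n-1) * X) := by ring
      · rw [norm_mul, Complex.norm_real, Real.norm_eq_abs, _root_.abs_of_nonneg (hpow0 n)]
        exact mul_le_mul_of_nonneg_left d2b (hpow0 n)
    refine this.trans ?_
    rw [← key]
    nlinarith [mul_le_mul_of_nonneg_left hA (mul_nonneg hn0 hn0),
      mul_le_mul_of_nonneg_left hB (mul_nonneg (by norm_num : (0:ℝ) ≤ 2) hn0), hC,
      mul_nonneg hMb hn0, mul_nonneg (mul_nonneg hMb hn0) hn0]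

end KBound

section Main

open Metric

variable {n : ℕ}

local notation "Edim" n => EuclideanSpace ℝ (Fin n)

lemma osc_main (n : ℕ) (hn : 2 ≤ n) (P : SchwartzMap (EuclideanSpace ℝ (Fin n)) ℂ) :
    ∃ C : ℝ, ∀ τ : ℝ, ‖∫ ξ : EuclideanSpace ℝ (Fin n),
        Complex.exp (Complex.I * τ * ‖ξ‖) * ((‖ξ‖ : ℂ) * P ξ)‖ ≤ C * (1 + |τ|) ^ (-2 : ℝ) := by
  classical
  set E := EuclideanSpace ℝ (Fin n) with hE
  haveI : Nontrivial E := by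
    apply Module.nontrivial_of_finrank_pos (R := ℝ) (M := E)
    rw [finrank_euclideanSpace_fin]; omega
  have hfr : Module.finrank ℝ E = n := finrank_euclideanSpace_fin
  have hP : ContDiff ℝ ((⊤:ℕ∞) : WithTop ℕ∞) (P : E → ℂ) := P.smooth ⊤
  -- decay constant
  set M : ℝ := 2 ^ (n+3) * ((Finset.Iic (n+3, 2)).sup
    (fun m => SchwartzMap.seminorm ℝ m.1 m.2) P) with hMdef
  have hM0 : 0 ≤ M := by
    apply mul_nonneg (by positivity)
    exact apply_nonneg _ P
  have hM : ∀ j, j ≤ 2 → ∀ ξ : E, ‖iteratedFDeriv ℝ j (P : E → ℂ) ξ‖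
      ≤ M * ((1 + ‖ξ‖) ^ (n+3))⁻¹ := by
    intro j hj ξ
    have h := SchwartzMap.one_add_le_sup_seminorm_apply (𝕜 := ℝ) (m := (n+3, 2))
      (k := n+3) (n := j) le_rfl hj P ξ
    have hpos : (0:ℝ) < (1 + ‖ξ‖) ^ (n+3) := by positivity
    rw [← le_div_iff₀' hpos] at h
    refine h.trans (le_of_eq ?_)
    rw [div_eq_mul_inv, hMdef]
  have h0' : ∀ ξ : E, ‖(P : E → ℂ) ξ‖ ≤ M * ((1+‖ξ‖)^(n+3))⁻¹ := by
    intro ξ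
    simpa [norm_iteratedFDeriv_zero] using hM 0 (by norm_num) ξ
  have h1' := hM 1 (by norm_num)
  have h2' := hM 2 (by norm_num)
  set K : ℝ := M * ((n:ℝ)+1)^2 with hKdef
  have hK0 : 0 ≤ K := by positivity
  have hBint : IntegrableOn (fun r : ℝ => K * ((1+|r|)^3)⁻¹) (Set.Ioi 0) volume := by
    have hI : Integrable (fun r : ℝ => (1+‖r‖) ^ (-(3:ℝ))) (volume : Measure ℝ) := by
      apply integrable_one_add_norm
      simp [Module.finrank_self]
    have heq : (fun r : ℝ => K * ((1+|r|)^3)⁻¹)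
        = fun r : ℝ => K * ((1+‖r‖) ^ (-(3:ℝ))) := by
      funext r
      rw [Real.norm_eq_abs, Real.rpow_neg (by positivity),
        ← Real.rpow_natCast (1+|r|) 3]
      norm_num
    rw [heq]
    exact (hI.const_mul K).integrableOn
  set IB : ℝ := ∫ r in Set.Ioi (0:ℝ), K * ((1+|r|)^3)⁻¹ with hIBdef
  have hIB0 : 0 ≤ IB := integral_nonneg (fun r => by positivity)
  have hfrlt : (Module.finrank ℝ E : ℝ) < (n:ℝ)+2 := by rw [hfr]; norm_num
  have hGint : Integrable (fun ξ : E => M * (1+‖ξ‖) ^ (-((n:ℝ)+2))) :=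
    (integrable_one_add_norm hfrlt).const_mul M
  have hGbound : ∀ ξ : E, ‖ξ‖ * ‖(P : E → ℂ) ξ‖ ≤ M * (1+‖ξ‖) ^ (-((n:ℝ)+2)) := by
    intro ξ
    have h := h0' ξ
    have h1r : (0:ℝ) < 1 + ‖ξ‖ := by positivity
    have hrp : (1+‖ξ‖) ^ (-((n:ℝ)+2)) = ((1+‖ξ‖)^(n+2:ℕ))⁻¹ := by
      rw [Real.rpow_neg h1r.le, ← Real.rpow_natCast (1+‖ξ‖) (n+2)]
      push_cast
      ring_nf
    rw [hrp]
    calc ‖ξ‖ * ‖(P : E → ℂ) ξ‖ ≤ (1+‖ξ‖) * (M * ((1+‖ξ‖)^(n+3))⁻¹) :=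
          mul_le_mul (by linarith [norm_nonneg ξ]) h (norm_nonneg _) h1r.le
      _ = M * ((1+‖ξ‖)^(n+2:ℕ))⁻¹ := by
          rw [show n+3 = (n+2)+1 from rfl, pow_succ, mul_inv]
          field_simp
  set S : ℝ := ((volume : Measure E).toSphere Set.univ).toReal with hSdef
  have hS0 : 0 ≤ S := ENNReal.toReal_nonneg
  set Jint : ℝ := ∫ ξ : E, M * (1+‖ξ‖) ^ (-((n:ℝ)+2)) with hJdef
  have hJ0 : 0 ≤ Jint := integral_nonneg (fun ξ => by positivity)
  refine ⟨4 * max Jint (S * IB), fun τ => ?_⟩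
  have hCmax0 : 0 ≤ max Jint (S * IB) := le_max_of_le_left hJ0
  set F : E → ℂ := fun ξ => Complex.exp (Complex.I * τ * ‖ξ‖) * ((‖ξ‖ : ℂ) * P ξ) with hFdef
  have hFcont : Continuous F := by
    apply Continuous.mul
    · exact Complex.continuous_exp.comp
        (continuous_const.mul (Complex.continuous_ofReal.comp continuous_norm))
    · exact (Complex.continuous_ofReal.comp continuous_norm).mul P.continuous
  have hFnorm : ∀ ξ : E, ‖F ξ‖ = ‖ξ‖ * ‖(P : E → ℂ) ξ‖ := by
    intro ξ
    rw [hFdef]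
    simp only [norm_mul, Complex.norm_real, Real.norm_eq_abs,
      _root_.abs_of_nonneg (norm_nonneg ξ)]
    rw [Complex.norm_exp]
    simp
  have hFint : Integrable F := by
    refine Integrable.mono' hGint hFcont.aestronglyMeasurable ?_
    filter_upwards with ξ
    rw [hFnorm ξ]
    exact hGbound ξ
  have globalB : ‖∫ ξ : E, F ξ‖ ≤ Jint := by
    refine (norm_integral_le_integral_norm F).trans ?_
    rw [hJdef]
    refine integral_mono hFint.norm hGint (fun ξ => ?_)
    rw [hFnorm ξ]
    exact hGbound ξ
  have hrpow_eq : (1+|τ|) ^ (-(2:ℝ)) = ((1+|τ|)^(2:ℕ))⁻¹ := by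
    rw [Real.rpow_neg (by positivity), ← Real.rpow_natCast (1+|τ|) 2]
    norm_num
  rcases le_or_gt |τ| 1 with hτs | hτb
  · -- small τ
    refine globalB.trans ?_
    have hq : (1/4 : ℝ) ≤ (1+|τ|) ^ (-(2:ℝ)) := by
      rw [hrpow_eq]
      rw [le_inv_comm₀ (by norm_num) (by positivity)]
      calc (1+|τ|)^(2:ℕ) ≤ 2^(2:ℕ) := by
            apply pow_le_pow_left₀ (by positivity) (by linarith) 2
        _ = (1/4:ℝ)⁻¹ := by norm_num
    calc Jint ≤ max Jint (S * IB) := le_max_left _ _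
      _ = (4 * max Jint (S * IB)) * (1/4) := by ring
      _ ≤ (4 * max Jint (S * IB)) * ((1+|τ|) ^ (-(2:ℝ))) := by
          apply mul_le_mul_of_nonneg_left hq (by linarith)
  · -- large τ
    have hτ0 : τ ≠ 0 := by
      intro h
      rw [h] at hτb
      simp at hτb
      linarith
    have hτsq : (0:ℝ) < τ^2 := by positivity
    have hpolar : ∫ ξ : E, F ξ = ∫ ω : Metric.sphere (0:E) 1,
        (∫ r in Set.Ioi (0:ℝ), r ^ (n-1) • F (r • (ω:E)))
          ∂(volume : Measure E).toSphere := by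
      have := polar_eq (volume : Measure E) hFint
      rwa [hfr] at this
    have hωb : ∀ ω : Metric.sphere (0:E) 1,
        ‖∫ r in Set.Ioi (0:ℝ), r ^ (n-1) • F (r • (ω:E))‖ ≤ IB / τ^2 := by
      intro ω
      have hω1 : ‖(ω : E)‖ = 1 := by
        have h := ω.2
        rwa [Metric.mem_sphere, dist_zero_right] at h
      have hKb := fun (r : ℝ) (hr : 0 ≤ r) =>
        K_bounds (P := (P : E → ℂ)) (ω := (ω : E)) hn hω1 hM0 h0' h1' h2' hr
      have habs : ∀ r : ℝ, r ∈ Set.Ioi (0:ℝ) → (1+|r|) = 1+r := by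
        intro r hr
        rw [_root_.abs_of_nonneg (le_of_lt hr)]
      have i0 : IntegrableOn (K0 n (P : E → ℂ) (ω:E)) (Set.Ioi 0) volume := by
        refine Integrable.mono' hBint (K0_cont hP).aestronglyMeasurable ?_
        filter_upwards [ae_restrict_mem measurableSet_Ioi] with r hr
        rw [habs r hr]
        exact (hKb r (le_of_lt hr)).1
      have i1 : IntegrableOn (K1 n (P : E → ℂ) (ω:E)) (Set.Ioi 0) volume := by
        refine Integrable.mono' hBint (K1_cont hP).aestronglyMeasurable ?_
        filter_upwards [ae_restrict_mem measurableSet_Ioi] with r hr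
        rw [habs r hr]
        exact (hKb r (le_of_lt hr)).2.1
      have i2 : IntegrableOn (K2 n (P : E → ℂ) (ω:E)) (Set.Ioi 0) volume := by
        refine Integrable.mono' hBint (K2_cont hP).aestronglyMeasurable ?_
        filter_upwards [ae_restrict_mem measurableSet_Ioi] with r hr
        rw [habs r hr]
        exact (hKb r (le_of_lt hr)).2.2
      have gtend : Filter.Tendsto (fun r : ℝ => K * ((1+|r|)^3)⁻¹)
          Filter.atTop (nhds 0) := by
        have ha : Filter.Tendsto (fun r : ℝ => 1+|r|) Filter.atTop Filter.atTop :=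
          Filter.tendsto_atTop_add_const_left _ 1 tendsto_abs_atTop_atTop
        have hb := (tendsto_pow_atTop (n := 3) (by norm_num)).comp ha
        have hc := hb.inv_tendsto_atTop
        simpa using hc.const_mul K
      have l0 : Filter.Tendsto (K0 n (P : E → ℂ) (ω:E)) Filter.atTop (nhds 0) := by
        refine squeeze_zero_norm' ?_ gtend
        filter_upwards [Filter.eventually_ge_atTop (0:ℝ)] with r hr
        rw [_root_.abs_of_nonneg hr]
        exact (hKb r hr).1
      have l1 : Filter.Tendsto (K1 n (P : E → ℂ) (ω:E)) Filter.atTop (nhds 0) := by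
        refine squeeze_zero_norm' ?_ gtend
        filter_upwards [Filter.eventually_ge_atTop (0:ℝ)] with r hr
        rw [_root_.abs_of_nonneg hr]
        exact (hKb r hr).2.1
      have hK00 : K0 n (P : E → ℂ) (ω:E) 0 = 0 := by
        simp [K0, zero_pow (show n ≠ 0 by omega)]
      have hK10 : K1 n (P : E → ℂ) (ω:E) 0 = 0 := by
        simp [K1, zero_pow (show n ≠ 0 by omega), zero_pow (show n-1 ≠ 0 by omega)]
      have ibp := ibp_double τ hτ0 _ _ _ (K0_deriv hP) (K1_deriv hP) hK00 hK10
        i0 i1 i2 l0 l1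
      have hinner : ∫ r in Set.Ioi (0:ℝ), r ^ (n-1) • F (r • (ω:E))
          = ∫ r in Set.Ioi (0:ℝ), Complex.exp (Complex.I * τ * r) * K0 n (P : E → ℂ) (ω:E) r := by
        refine setIntegral_congr_fun measurableSet_Ioi (fun r hr => ?_)
        have hr0 : (0:ℝ) < r := hr
        have hnrm : ‖r • (ω:E)‖ = r := by
          rw [norm_smul, hω1, mul_one, Real.norm_eq_abs, _root_.abs_of_nonneg hr0.le]
        have hpow : ((r:ℂ))^(n-1) * (r:ℂ) = ((r:ℂ))^n := by
          rw [← pow_succ, Nat.sub_add_cancel (by omega)]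
        rw [hFdef]
        simp only [hnrm, K0]
        rw [Complex.real_smul]
        push_cast
        linear_combination (Complex.exp (Complex.I * τ * r) * P (r • (ω:E))) * hpow
      rw [hinner, ibp, norm_mul]
      have hnc : ‖(-1/((τ:ℂ)^2))‖ = 1/τ^2 := by
        rw [norm_div, norm_neg, norm_one]
        congr 1
        rw [show ((τ:ℂ))^2 = ((τ^2 : ℝ) : ℂ) by push_cast; ring, Complex.norm_real,
          Real.norm_eq_abs, _root_.abs_of_nonneg hτsq.le]
      rw [hnc]
      have hbnd : ‖∫ r in Set.Ioi (0:ℝ),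
          Complex.exp (Complex.I * τ * r) * K2 n (P : E → ℂ) (ω:E) r‖ ≤ IB := by
        refine (norm_integral_le_integral_norm _).trans ?_
        rw [hIBdef]
        refine integral_mono_ae (osc_integrable τ i2).norm hBint ?_
        filter_upwards [ae_restrict_mem measurableSet_Ioi] with r hr
        rw [norm_mul]
        have he1 : ‖Complex.exp (Complex.I * τ * r)‖ = 1 := by
          rw [Complex.norm_exp]
          simp
        rw [he1, one_mul, habs r hr]
        exact (hKb r (le_of_lt hr)).2.2
      calc (1/τ^2) * ‖∫ r in Set.Ioi (0:ℝ),
            Complex.exp (Complex.I * τ * r) * K2 n (P : E → ℂ) (ω:E) r‖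
          ≤ (1/τ^2) * IB := by
            apply mul_le_mul_of_nonneg_left hbnd (by positivity)
        _ = IB / τ^2 := by ring
    have total : ‖∫ ξ : E, F ξ‖ ≤ (IB / τ^2) * S := by
      rw [hpolar, hSdef]
      exact norm_integral_le_of_norm_le_const (Filter.Eventually.of_forall hωb)
    refine total.trans ?_
    rw [hrpow_eq]
    have h2τ : (1+|τ|)^(2:ℕ) ≤ 4 * τ^2 := by
      have h4 : (1+|τ|) ≤ 2*|τ| := by linarith
      calc (1+|τ|)^(2:ℕ) ≤ (2*|τ|)^(2:ℕ) := by
            apply pow_le_pow_left₀ (by positivity) h4 2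
        _ = 4 * τ^2 := by rw [mul_pow, _root_.sq_abs]; norm_num
    have hpos2 : (0:ℝ) < (1+|τ|)^(2:ℕ) := by positivity
    have step : (IB * S) / τ^2 ≤ (4 * (S * IB)) * ((1+|τ|)^(2:ℕ))⁻¹ := by
      rw [div_le_iff₀ hτsq, mul_comm ((4 * (S * IB))) _, ← mul_assoc]
      calc IB * S = (((1+|τ|)^(2:ℕ))⁻¹ * ((1+|τ|)^(2:ℕ))) * (IB * S) := by
            rw [inv_mul_cancel₀ (ne_of_gt hpos2), one_mul]
        _ ≤ (((1+|τ|)^(2:ℕ))⁻¹ * (4*τ^2)) * (IB * S) := by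
            apply mul_le_mul_of_nonneg_right _ (by positivity)
            apply mul_le_mul_of_nonneg_left h2τ (by positivity)
        _ = ((1+|τ|)^(2:ℕ))⁻¹ * 4 * (S * IB) * τ^2 := by ring
    refine le_trans ?_ (step.trans ?_)
    · apply le_of_eq; ring
    · apply mul_le_mul_of_nonneg_right _ (by positivity)
      have : S * IB ≤ max Jint (S * IB) := le_max_right _ _
      linarith

end Main

/-- Schwartz inclusion for the model oscillatory integral: for `g` in the Schwartz space
on `ℝⁿ` with `n ≥ 2`, the oscillatory integral
`I(τ) = ∫ e^{iτ|ξ|} |ξ| |ĝ(ξ)|² dξ` satisfies `|I(τ)| ≤ C (1+|τ|)^{-2}`. -/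
theorem schwartz_oscillatory_decay (n : ℕ) (hn : 2 ≤ n)
    (g : SchwartzMap (EuclideanSpace ℝ (Fin n)) ℂ) :
    ∃ C : ℝ, ∀ τ : ℝ,
      ‖∫ ξ : EuclideanSpace ℝ (Fin n),
          Complex.exp (Complex.I * τ * ‖ξ‖) *
            ((‖ξ‖ : ℂ) * (‖𝓕 (⇑g) ξ‖ : ℂ) ^ 2)‖ ≤
        C * (1 + |τ|) ^ (-2 : ℝ) := by
  set w := SchwartzMap.fourierTransformCLM ℝ g with hw
  have htg : Function.HasTemperateGrowth
      (fun ξ : EuclideanSpace ℝ (Fin n) => (starRingEnd ℂ) (w ξ)) := by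
    constructor
    · have h1 : ContDiff ℝ ((⊤:ℕ∞) : WithTop ℕ∞) (⇑w) := w.smooth ⊤
      have h2 : ContDiff ℝ ((⊤:ℕ∞) : WithTop ℕ∞) (⇑Complex.conjLIE) :=
        Complex.conjLIE.toLinearIsometry.toContinuousLinearMap.contDiff
      exact h2.comp h1
    · intro N
      refine ⟨0, 2 ^ 0 * ((Finset.Iic (0, N)).sup
        (fun m => SchwartzMap.seminorm ℝ m.1 m.2) w), fun x => ?_⟩
      have heq : ‖iteratedFDeriv ℝ N
          (fun ξ : EuclideanSpace ℝ (Fin n) => (starRingEnd ℂ) (w ξ)) x‖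
          = ‖iteratedFDeriv ℝ N (⇑w) x‖ :=
        Complex.conjLIE.norm_iteratedFDeriv_comp_left (⇑w) x N
      rw [heq]
      have h := SchwartzMap.one_add_le_sup_seminorm_apply (𝕜 := ℝ) (m := (0, N))
        (k := 0) (n := N) le_rfl le_rfl w x
      simpa using h
  set P := SchwartzMap.bilinLeftCLM (ContinuousLinearMap.mul ℝ ℂ) htg w with hPdef
  have hpoint : ∀ ξ : EuclideanSpace ℝ (Fin n),
      ((‖𝓕 (⇑g) ξ‖ : ℂ)) ^ 2 = P ξ := by
    intro ξ
    have h1 : 𝓕 (⇑g) ξ = w ξ := rfl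
    have h2 : P ξ = w ξ * (starRingEnd ℂ) (w ξ) := rfl
    rw [h1, h2, Complex.mul_conj]
    rw [show ((‖w ξ‖ : ℂ)) ^ 2 = ((‖w ξ‖ ^ 2 : ℝ) : ℂ) by push_cast; ring]
    congr 1
    rw [Complex.sq_norm]
  obtain ⟨C, hC⟩ := osc_main n hn P
  refine ⟨C, fun τ => ?_⟩
  have h := hC τ
  simp only [hpoint] at h ⊢
  exact h
end

section
/- Gronwall-type derivative bound: let A : [0,∞) → M_m(ℂ) be C¹ in a parameter ε with ‖A(t)‖ ≤ Ψ(t) and ‖∂_ε A(t)‖ ≤ (1+t)Ψ(t) for an integrable Ψ, and let Y(t,ε) solve ∂_t Y = A(t,ε)Y, Y(0,ε) = I. Then ‖∂_ε Y(t,ε)‖ ≤ C exp(∫_0^t (1+s)Ψ(s) ds) for all t ≥ 0, with C depending only on ∫_0^∞ Ψ. -/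
/-!
Gronwall's inequality first bounds `‖Y(t, ε)‖` by `M = exp ∫_0^∞ Ψ`. For two parameters `e, ε`
the difference `Y(·, e) - Y(·, ε)` vanishes at `0` and solves a linear equation forced by
`(A(·, e) - A(·, ε)) Y(·, ε)`, of norm at most `|e - ε| (1 + t) Ψ(t) M`; Gronwall again shows
that `ε ↦ Y(t, ε)` is Lipschitz with constant `M exp ∫_0^t (1 + s) Ψ(s) ds`, and a derivative is
bounded by any Lipschitz constant. No equation for `∂_ε Y` itself is needed.
-/

open MeasureTheory Set Filter Topology

theorem ContinuousOn.hasDerivWithinAt_Ici_primitive {E : Type*} [NormedAddCommGroup E]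
    [NormedSpace ℝ E] [CompleteSpace E] {g : ℝ → E} {a b x : ℝ}
    (hg : ContinuousOn g (Icc a b)) (hx : x ∈ Ico a b) :
    HasDerivWithinAt (fun u => ∫ s in a..u, g s) (g x) (Ici x) x :=
  have hnhds : Icc a b ∈ 𝓝[>] x := Icc_mem_nhdsGT_of_mem hx
  intervalIntegral.integral_hasDerivWithinAt_right
    ((hg.mono (Icc_subset_Icc_right hx.2.le)).intervalIntegrable_of_Icc hx.1)
    ((hg.stronglyMeasurableAtFilter_nhdsWithin measurableSet_Icc x).filter_mono
      (nhdsWithin_le_of_mem hnhds))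
    ((hg x (Ico_subset_Icc_self hx)).mono_of_mem_nhdsWithin hnhds)

theorem norm_add_le_mul_exp_of_norm_deriv_le {E : Type*} [NormedAddCommGroup E]
    [NormedSpace ℝ E] {f f' : ℝ → E} {φ g : ℝ → ℝ} {a b c : ℝ} (hc : 0 ≤ c)
    (hf : ContinuousOn f (Icc a b)) (hf' : ∀ x ∈ Ico a b, HasDerivWithinAt f (f' x) (Ici x) x)
    (hφ : ContinuousOn φ (Icc a b)) (hφ' : ∀ x ∈ Ico a b, HasDerivWithinAt φ (g x) (Ici x) x)
    (bound : ∀ x ∈ Ico a b, ‖f' x‖ ≤ g x * (‖f x‖ + c)) :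
    ∀ x ∈ Icc a b, ‖f x‖ + c ≤ (‖f a‖ + c) * Real.exp (φ x - φ a) := by
  intro x hx
  -- The barrier theorem needs a strict inequality, so compare with a `δ`-perturbed
  -- solution of `B' = g (B + c)` and let `δ → 0`.
  set B : ℝ → ℝ → ℝ := fun δ y => (‖f a‖ + c + δ) * Real.exp (φ y - φ a + δ * (y - a)) - c
  have hB : ∀ δ > 0, ‖f x‖ ≤ B δ x := by
    intro δ hδ
    have hpos : 0 < ‖f a‖ + c + δ := by positivity
    refine image_norm_le_of_norm_deriv_right_lt_deriv_boundary' hf hf'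
      (B' := fun y => (‖f a‖ + c + δ) * (Real.exp (φ y - φ a + δ * (y - a)) * (g y + δ)))
      (by simp only [B, sub_self, mul_zero, add_zero, Real.exp_zero, mul_one]; linarith)
      (by fun_prop) (fun y hy => ?_) (fun y hy hfy => ?_) hx
    · exact ((((hφ' y hy).sub_const (φ a)).add
        (((hasDerivWithinAt_id y _).sub_const a).const_mul δ)).exp.const_mul _).sub_const c
        |>.congr_deriv (by simp only [Pi.add_apply, id]; ring)
    · have hE := Real.exp_pos (φ y - φ a + δ * (y - a))
      calc ‖f' y‖ ≤ g y * (‖f y‖ + c) := bound y hy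
        _ = g y * ((‖f a‖ + c + δ) * Real.exp (φ y - φ a + δ * (y - a))) := by rw [hfy]; ring
        _ < _ := by nlinarith [mul_pos (mul_pos hpos hE) hδ]
  have hlim : Tendsto (fun δ => B δ x) (𝓝[>] 0) (𝓝 (B 0 x)) :=
    ((show Continuous fun δ => B δ x by fun_prop).tendsto 0).mono_left nhdsWithin_le_nhds
  have := ge_of_tendsto hlim (eventually_nhdsWithin_of_forall hB)
  simp only [B, add_zero, zero_mul] at this
  linarith

theorem norm_add_le_mul_exp_integral_of_norm_deriv_le {E : Type*} [NormedAddCommGroup E]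
    [NormedSpace ℝ E] {f f' : ℝ → E} {g : ℝ → ℝ} {a b c : ℝ} (hc : 0 ≤ c)
    (hf : ContinuousOn f (Icc a b)) (hf' : ∀ x ∈ Ico a b, HasDerivWithinAt f (f' x) (Ici x) x)
    (hg : ContinuousOn g (Icc a b)) (bound : ∀ x ∈ Ico a b, ‖f' x‖ ≤ g x * (‖f x‖ + c)) :
    ∀ x ∈ Icc a b, ‖f x‖ + c ≤ (‖f a‖ + c) * Real.exp (∫ s in a..x, g s) := by
  intro x hx
  have hab : a ≤ b := hx.1.trans hx.2
  have hφ : ContinuousOn (fun u => ∫ s in a..u, g s) (Icc a b) := by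
    simpa [uIcc_of_le hab] using
      intervalIntegral.continuousOn_primitive_interval' (hg.intervalIntegrable_of_Icc hab)
        (left_mem_uIcc (a := a) (b := b))
  simpa using norm_add_le_mul_exp_of_norm_deriv_le hc hf hf' hφ
    (fun y hy => hg.hasDerivWithinAt_Ici_primitive hy) bound x hx

section LinearODE

variable {R : Type*} [NormedRing R] [NormedSpace ℝ R] {g : ℝ → ℝ} {a b : ℝ}

theorem norm_le_mul_exp_integral_of_hasDerivAt_mul {A Y : ℝ → R}
    (hg : ContinuousOn g (Icc a b)) (hY : ∀ x ∈ Icc a b, HasDerivAt Y (A x * Y x) x)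
    (hA : ∀ x ∈ Icc a b, ‖A x‖ ≤ g x) :
    ∀ x ∈ Icc a b, ‖Y x‖ ≤ ‖Y a‖ * Real.exp (∫ s in a..x, g s) := by
  simpa using norm_add_le_mul_exp_integral_of_norm_deriv_le le_rfl
    (fun x hx => (hY x hx).continuousAt.continuousWithinAt)
    (fun x hx => (hY x (Ico_subset_Icc_self hx)).hasDerivWithinAt) hg
    (fun x hx => by
      simpa using (norm_mul_le _ _).trans
        (mul_le_mul_of_nonneg_right (hA x (Ico_subset_Icc_self hx)) (norm_nonneg _)))

theorem norm_sub_add_le_mul_exp_integral_of_hasDerivAt_mul {A₁ A₂ Y₁ Y₂ : ℝ → R} {η M : ℝ}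
    (hη : 0 ≤ η) (hg : ContinuousOn g (Icc a b))
    (hY₁ : ∀ x ∈ Icc a b, HasDerivAt Y₁ (A₁ x * Y₁ x) x)
    (hY₂ : ∀ x ∈ Icc a b, HasDerivAt Y₂ (A₂ x * Y₂ x) x)
    (hA₁ : ∀ x ∈ Icc a b, ‖A₁ x‖ ≤ g x) (hA : ∀ x ∈ Icc a b, ‖A₁ x - A₂ x‖ ≤ η * g x)
    (hY₂M : ∀ x ∈ Icc a b, ‖Y₂ x‖ ≤ M) :
    ∀ x ∈ Icc a b, ‖Y₁ x - Y₂ x‖ + η * M ≤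
      (‖Y₁ a - Y₂ a‖ + η * M) * Real.exp (∫ s in a..x, g s) := by
  intro x hx
  have hM : 0 ≤ M := (norm_nonneg _).trans (hY₂M a (left_mem_Icc.2 (hx.1.trans hx.2)))
  refine norm_add_le_mul_exp_integral_of_norm_deriv_le (mul_nonneg hη hM)
    (fun y hy => ((hY₁ y hy).sub (hY₂ y hy)).continuousAt.continuousWithinAt)
    (fun y hy => ((hY₁ y (Ico_subset_Icc_self hy)).sub
      (hY₂ y (Ico_subset_Icc_self hy))).hasDerivWithinAt) hg (fun y hy => ?_) x hx
  replace hy := Ico_subset_Icc_self hy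
  calc ‖A₁ y * Y₁ y - A₂ y * Y₂ y‖ = ‖A₁ y * (Y₁ y - Y₂ y) + (A₁ y - A₂ y) * Y₂ y‖ := by
        noncomm_ring
    _ ≤ ‖A₁ y‖ * ‖Y₁ y - Y₂ y‖ + ‖A₁ y - A₂ y‖ * ‖Y₂ y‖ :=
        (norm_add_le _ _).trans (add_le_add (norm_mul_le _ _) (norm_mul_le _ _))
    _ ≤ g y * ‖Y₁ y - Y₂ y‖ + η * g y * M :=
        add_le_add (mul_le_mul_of_nonneg_right (hA₁ y hy) (norm_nonneg _))
          (mul_le_mul (hA y hy) (hY₂M y hy) (norm_nonneg _) ((norm_nonneg _).trans (hA y hy)))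
    _ = g y * (‖Y₁ y - Y₂ y‖ + η * M) := by ring

theorem norm_le_mul_exp_integral_Ici_of_hasDerivAt_mul {A Y : ℝ → R} {Ψ : ℝ → ℝ}
    (hΨpos : ∀ x ∈ Ici 0, 0 ≤ Ψ x) (hΨint : IntegrableOn Ψ (Ici 0))
    (hΨcont : ContinuousOn Ψ (Ici 0)) (hY : ∀ x ∈ Ici 0, HasDerivAt Y (A x * Y x) x)
    (hA : ∀ x ∈ Ici 0, ‖A x‖ ≤ Ψ x) :
    ∀ x ≥ 0, ‖Y x‖ ≤ ‖Y 0‖ * Real.exp (∫ s in Ici 0, Ψ s) := by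
  intro x hx
  calc ‖Y x‖ ≤ ‖Y 0‖ * Real.exp (∫ s in 0..x, Ψ s) :=
        norm_le_mul_exp_integral_of_hasDerivAt_mul (hΨcont.mono Icc_subset_Ici_self)
          (fun y hy => hY y hy.1) (fun y hy => hA y hy.1) x ⟨hx, le_rfl⟩
    _ ≤ ‖Y 0‖ * Real.exp (∫ s in Ici 0, Ψ s) := by
        gcongr
        rw [intervalIntegral.integral_of_le hx]
        exact setIntegral_mono_set hΨint (ae_restrict_of_forall_mem measurableSet_Ici hΨpos)
          (LE.le.eventuallyLE fun u hu => hu.1.le)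

end LinearODE

/-- Gronwall-type bound on the parameter derivative of a fundamental solution:
if `∂_t Y(t,ε) = A(t,ε) Y(t,ε)`, `Y(0,ε) = I`, with `‖A(t,ε)‖ ≤ Ψ(t)`,
`‖∂_ε A(t,ε)‖ ≤ (1+t)Ψ(t)` for an integrable `Ψ ≥ 0`, then the parameter derivative
`Z = ∂_ε Y` satisfies `‖Z(t,ε)‖ ≤ C exp(∫_0^t (1+s)Ψ(s) ds)` for all `t ≥ 0`, with `C`
depending only on `∫_0^∞ Ψ`. -/
theorem parameter_derivative_gronwall_bound (m : ℕ)
    (Ψ : ℝ → ℝ) (hΨpos : ∀ t, 0 ≤ Ψ t)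
    (hΨint : IntegrableOn Ψ (Set.Ici (0:ℝ)))
    (hΨcont : ContinuousOn Ψ (Set.Ici 0)) :
    ∃ C > (0:ℝ),
      ∀ (A A' Y Z : ℝ → ℝ → (EuclideanSpace ℂ (Fin m) →L[ℂ] EuclideanSpace ℂ (Fin m))),
        (∀ t ∈ Set.Ici (0:ℝ), ∀ ε : ℝ, HasDerivAt (fun s => Y s ε) (A t ε ∘L Y t ε) t) →
        (∀ ε : ℝ, Y 0 ε = ContinuousLinearMap.id ℂ (EuclideanSpace ℂ (Fin m))) →
        (∀ t ∈ Set.Ici (0:ℝ), ∀ ε : ℝ, HasDerivAt (fun e => A t e) (A' t ε) ε) →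
        (∀ t ∈ Set.Ici (0:ℝ), ∀ ε : ℝ, HasDerivAt (fun e => Y t e) (Z t ε) ε) →
        (∀ t ∈ Set.Ici (0:ℝ), ∀ ε : ℝ, ‖A t ε‖ ≤ Ψ t) →
        (∀ t ∈ Set.Ici (0:ℝ), ∀ ε : ℝ, ‖A' t ε‖ ≤ (1 + t) * Ψ t) →
        ∀ t ≥ (0:ℝ), ∀ ε : ℝ,
          ‖Z t ε‖ ≤ C * Real.exp (∫ s in Set.Icc 0 t, (1 + s) * Ψ s) := by
  set M := Real.exp (∫ s in Ici 0, Ψ s)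
  refine ⟨M, Real.exp_pos _, ?_⟩
  intro A A' Y Z hY hY₀ hA' hZ hA hA'bound t ht ε
  have hY_le (s : ℝ) (hs : 0 ≤ s) (e : ℝ) : ‖Y s e‖ ≤ M :=
    (norm_le_mul_exp_integral_Ici_of_hasDerivAt_mul (fun x _ => hΨpos x) hΨint hΨcont
      (fun x hx => hY x hx e) (fun x hx => hA x hx e) s hs).trans
      (mul_le_of_le_one_left (Real.exp_pos _).le (hY₀ e ▸ ContinuousLinearMap.norm_id_le))
  have hA_lip (s : ℝ) (hs : 0 ≤ s) (e e' : ℝ) :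
      ‖A s e - A s e'‖ ≤ ‖e - e'‖ * ((1 + s) * Ψ s) := by
    rw [mul_comm]
    exact Convex.norm_image_sub_le_of_norm_hasDerivWithin_le
      (fun e _ => (hA' s hs e).hasDerivWithinAt) (fun e _ => hA'bound s hs e) convex_univ
      (mem_univ e') (mem_univ e)
  have hY_lip (e : ℝ) :
      ‖Y t e - Y t ε‖ ≤ M * Real.exp (∫ s in 0..t, (1 + s) * Ψ s) * ‖e - ε‖ := by
    have := norm_sub_add_le_mul_exp_integral_of_hasDerivAt_mul (norm_nonneg (e - ε))
      (g := fun s => (1 + s) * Ψ s)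
      ((continuousOn_const.add continuousOn_id).mul (hΨcont.mono Icc_subset_Ici_self))
      (fun x hx => hY x hx.1 e) (fun x hx => hY x hx.1 ε)
      (fun x hx => (hA x hx.1 e).trans (le_mul_of_one_le_left (hΨpos x) (by linarith [hx.1])))
      (fun x hx => hA_lip x hx.1 e ε) (fun x hx => hY_le x hx.1 ε) t ⟨ht, le_rfl⟩
    simp only [hY₀, sub_self, norm_zero, zero_add] at this
    nlinarith [mul_nonneg (norm_nonneg (e - ε)) (Real.exp_pos (∫ s in Ici 0, Ψ s)).le]
  rw [integral_Icc_eq_integral_Ioc, ← intervalIntegral.integral_of_le ht]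
  exact (hZ t ht ε).le_of_lip' (by positivity) (Eventually.of_forall hY_lip)
end

section
/- If v : ℝ → ℂ solves the second-order ODE v'' + c(t)² r² v = 0 with c(t)² = 1 + γ(t), where γ is C¹, γ(t) → γ_± as t → ±∞, and γ' ∈ L¹(ℝ), and r > 0, then there exist constants a_±, b_± ∈ ℂ such that v(t) - a_± e^{i r ∫_0^t c(s)ds} - b_± e^{-i r ∫_0^t c(s)ds} → 0 and v'(t) - i r c(t)(a_± e^{i r ∫_0^t c(s)ds} - b_± e^{-i r ∫_0^t c(s)ds}) → 0 as t → ±∞. -/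
/-!
The energy `E = ‖v'‖² + (1 + γ) r² ‖v‖²` satisfies `|E'| = |γ'| r² ‖v‖² ≤ |γ'| E`, so a
Gronwall argument in both time directions gives `E ≤ E(0) exp ‖γ'‖₁` and `v'` is bounded.
With `c = √(1 + γ)` and `θ = r ∫₀ᵗ c`, write `v = A e^{iθ} + B e^{-iθ}` and
`v' = i r c (A e^{iθ} - B e^{-iθ})`, i.e. `A = (v - i v' / (r c)) e^{-iθ} / 2` and `B` the same
with `-r`. Along solutions `A' = i c' v' e^{-iθ} / (2 r c²)`, which is dominated by a multiple of
`|γ'| ∈ L¹` since `c ≥ 1`; hence `A` and `B` converge at `±∞`, and their limits are `a_±, b_±`.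
-/

open Filter intervalIntegral Complex MeasureTheory Topology

theorem le_mul_exp_integral_of_hasDerivAt_le {E E' g : ℝ → ℝ}
    (hE : ∀ t, HasDerivAt E (E' t) t) (hg : Continuous g) (hE' : ∀ t, E' t ≤ g t * E t)
    {t : ℝ} (ht : 0 ≤ t) : E t ≤ E 0 * Real.exp (∫ s in (0 : ℝ)..t, g s) := by
  set G : ℝ → ℝ := fun t => ∫ s in (0 : ℝ)..t, g s
  have hG : ∀ t, HasDerivAt G (g t) t := fun t => (hg.integral_hasStrictDerivAt 0 t).hasDerivAt
  have hanti : Antitone fun t => E t * Real.exp (-G t) :=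
    antitone_of_hasDerivAt_nonpos (fun t => (hE t).mul (hG t).neg.exp) fun t => by
      simp only [Pi.zero_apply, Pi.neg_apply]
      nlinarith [mul_nonneg (sub_nonneg.2 (hE' t)) (Real.exp_pos (-G t)).le]
  calc E t = E t * Real.exp (-G t) * Real.exp (G t) := by
        rw [mul_assoc, ← Real.exp_add, neg_add_cancel, Real.exp_zero, mul_one]
    _ ≤ E 0 * Real.exp (G t) := by
        gcongr
        simpa [G] using hanti ht

theorem intervalIntegral_le_integral_of_nonneg {g : ℝ → ℝ} (hg0 : ∀ t, 0 ≤ g t)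
    (hg : Integrable g) {a b : ℝ} (hab : a ≤ b) : ∫ s in a..b, g s ≤ ∫ s, g s := by
  rw [intervalIntegral.integral_of_le hab]
  exact setIntegral_le_integral hg (ae_of_all _ hg0)

theorem le_mul_exp_integral_of_abs_hasDerivAt_le {E E' g : ℝ → ℝ}
    (hE : ∀ t, HasDerivAt E (E' t) t) (hE0 : 0 ≤ E 0) (hg : Continuous g) (hg0 : ∀ t, 0 ≤ g t)
    (hgi : Integrable g) (hE' : ∀ t, |E' t| ≤ g t * E t) (t : ℝ) :
    E t ≤ E 0 * Real.exp (∫ s, g s) := by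
  rcases le_total 0 t with ht | ht
  · calc E t ≤ E 0 * Real.exp (∫ s in (0 : ℝ)..t, g s) :=
          le_mul_exp_integral_of_hasDerivAt_le hE hg (fun t => (le_abs_self _).trans (hE' t)) ht
      _ ≤ E 0 * Real.exp (∫ s, g s) := by
          gcongr; exact intervalIntegral_le_integral_of_nonneg hg0 hgi ht
  · have hE_neg : ∀ t, HasDerivAt (fun s => E (-s)) (-E' (-t)) t := fun t => by
      simpa [Function.comp_def] using (hE (-t)).scomp t (hasDerivAt_neg' t)
    have := le_mul_exp_integral_of_hasDerivAt_le hE_neg (hg.comp continuous_neg)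
      (fun t => (neg_le_abs _).trans (abs_neg (E' (-t)) ▸ hE' (-t))) (neg_nonneg.2 ht)
    simp only [neg_neg, neg_zero, Function.comp_apply, intervalIntegral.integral_comp_neg] at this
    calc E t ≤ E 0 * Real.exp (∫ s in t..0, g s) := this
      _ ≤ E 0 * Real.exp (∫ s, g s) := by
          gcongr; exact intervalIntegral_le_integral_of_nonneg hg0 hgi ht

theorem exists_tendsto_atTop_atBot_of_norm_deriv_le {F : Type*} [NormedAddCommGroup F]
    [NormedSpace ℝ F] [CompleteSpace F] {f f' : ℝ → F} {g : ℝ → ℝ}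
    (hf : ∀ t, HasDerivAt f (f' t) t) (hg : Integrable g) (hfg : ∀ t, ‖f' t‖ ≤ g t) :
    (∃ a, Tendsto f atTop (𝓝 a)) ∧ ∃ b, Tendsto f atBot (𝓝 b) := by
  have hf' : f' = deriv f := funext fun t => (hf t).deriv.symm
  have hint : Integrable f' :=
    hg.mono' (hf' ▸ aestronglyMeasurable_deriv f volume) (ae_of_all _ hfg)
  exact ⟨⟨_, tendsto_limUnder_of_hasDerivAt_of_integrableOn_Ioi (a := 0) (fun t _ => hf t)
      hint.integrableOn⟩,
    _, tendsto_limUnder_of_hasDerivAt_of_integrableOn_Iic (a := 0) (fun t _ => hf t)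
      hint.integrableOn⟩

theorem hasDerivAt_norm_sq_add_mul_norm_sq {k k' : ℝ → ℝ} {v w : ℝ → ℂ} {t : ℝ}
    (hk : HasDerivAt k (k' t) t) (hv : HasDerivAt v (w t) t)
    (hw : HasDerivAt w (-(k t : ℂ) * v t) t) :
    HasDerivAt (fun t => ‖w t‖ ^ 2 + k t * ‖v t‖ ^ 2) (k' t * ‖v t‖ ^ 2) t := by
  have hkv : -(k t : ℂ) * v t = (-k t) • v t := by simp [Complex.real_smul]
  refine (hw.norm_sq.add (hk.mul hv.norm_sq)).congr_deriv ?_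
  rw [hkv, real_inner_smul_right, real_inner_comm (v t)]
  ring

theorem exists_forall_norm_le_of_kirchhoff {γ : ℝ → ℝ} {r : ℝ} (hγpos : ∀ t, 0 ≤ γ t)
    (hγ : ContDiff ℝ 1 γ) (hγ' : Integrable (deriv γ)) {v w : ℝ → ℂ}
    (hv : ∀ t, HasDerivAt v (w t) t)
    (hw : ∀ t, HasDerivAt w (-(((1 + γ t) * r ^ 2 : ℝ) : ℂ) * v t) t) :
    ∃ K, ∀ t, ‖w t‖ ≤ K := by
  set E : ℝ → ℝ := fun t => ‖w t‖ ^ 2 + (1 + γ t) * r ^ 2 * ‖v t‖ ^ 2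
  have hE : ∀ t, HasDerivAt E (deriv γ t * r ^ 2 * ‖v t‖ ^ 2) t := fun t =>
    hasDerivAt_norm_sq_add_mul_norm_sq (k := fun t => (1 + γ t) * r ^ 2)
      (k' := fun t => deriv γ t * r ^ 2)
      ((((hγ.differentiable one_ne_zero) t).hasDerivAt.const_add 1).mul_const _)
      (hv t) (hw t)
  have hE' : ∀ t, |deriv γ t * r ^ 2 * ‖v t‖ ^ 2| ≤ |deriv γ t| * E t := fun t => by
    rw [mul_assoc, abs_mul, abs_of_nonneg (a := r ^ 2 * ‖v t‖ ^ 2) (by positivity)]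
    gcongr
    nlinarith [sq_nonneg ‖w t‖, mul_nonneg (hγpos t) (by positivity : 0 ≤ r ^ 2 * ‖v t‖ ^ 2)]
  have hE0 : 0 ≤ E 0 := by have := hγpos 0; positivity
  refine ⟨√(E 0 * Real.exp (∫ s, |deriv γ s|)), fun t => Real.le_sqrt_of_sq_le ?_⟩
  calc ‖w t‖ ^ 2 ≤ E t := le_add_of_nonneg_right (by have := hγpos t; positivity)
    _ ≤ _ := le_mul_exp_integral_of_abs_hasDerivAt_le hE hE0 (hγ.continuous_deriv le_rfl).abs
        (fun t => abs_nonneg _) hγ'.abs hE' t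

/-- The coefficient of `exp (I r Θ)` in the decomposition of `v` (with `w = v'`);
`amplitude (-r)` is the coefficient of `exp (-I r Θ)`. -/
noncomputable def amplitude (r : ℝ) (c Θ : ℝ → ℝ) (v w : ℝ → ℂ) (t : ℝ) : ℂ :=
  (v t - I * w t / (r * c t)) * exp (-(I * r * Θ t)) / 2

theorem hasDerivAt_amplitude {r : ℝ} {c c' Θ : ℝ → ℝ} {v w : ℝ → ℂ} {t : ℝ} (hr : r ≠ 0)
    (hc : HasDerivAt c (c' t) t) (hc0 : c t ≠ 0) (hΘ : HasDerivAt Θ (c t) t)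
    (hv : HasDerivAt v (w t) t) (hw : HasDerivAt w (-((c t ^ 2 * r ^ 2 : ℝ) : ℂ) * v t) t) :
    HasDerivAt (amplitude r c Θ v w)
      (I * c' t / (2 * r * c t ^ 2) * w t * exp (-(I * r * Θ t))) t := by
  have hrc : (r * c t : ℂ) ≠ 0 := by exact_mod_cast mul_ne_zero hr hc0
  have hphase : HasDerivAt (fun s => exp (-(I * r * Θ s)))
      (-(I * r * c t) * exp (-(I * r * Θ t))) t := by
    simpa [mul_comm] using ((hΘ.ofReal_comp.const_mul (I * r)).neg).cexp
  have hq : HasDerivAt (fun s => I * w s / (r * c s))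
      ((I * (-((c t ^ 2 * r ^ 2 : ℝ) : ℂ) * v t) * (r * c t) - I * w t * (r * c' t))
        / (r * c t) ^ 2) t :=
    (hw.const_mul I).div (hc.ofReal_comp.const_mul (r : ℂ)) hrc
  refine (((hv.sub hq).mul hphase).div_const 2).congr_deriv ?_
  have hc0' : (c t : ℂ) ≠ 0 := by exact_mod_cast hc0
  have hr' : (r : ℂ) ≠ 0 := by exact_mod_cast hr
  simp only [Pi.sub_apply]
  push_cast
  field_simp
  linear_combination ((c t : ℂ) ^ 2 * r * w t) * I_sq

theorem amplitude_mul_exp_add (r : ℝ) (c Θ : ℝ → ℝ) (v w : ℝ → ℂ) (t : ℝ) :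
    amplitude r c Θ v w t * exp (I * r * Θ t) + amplitude (-r) c Θ v w t * exp (-(I * r * Θ t))
      = v t := by
  have h : exp (-(I * r * Θ t)) * exp (I * r * Θ t) = 1 := by rw [← exp_add]; simp
  simp only [amplitude, ofReal_neg, neg_mul, neg_neg, mul_neg, div_neg]
  linear_combination v t * h

theorem amplitude_mul_exp_sub {r : ℝ} {c : ℝ → ℝ} (Θ : ℝ → ℝ) (v w : ℝ → ℂ) {t : ℝ}
    (hr : r ≠ 0) (hc0 : c t ≠ 0) :
    I * r * c t * (amplitude r c Θ v w t * exp (I * r * Θ t)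
      - amplitude (-r) c Θ v w t * exp (-(I * r * Θ t))) = w t := by
  have h : exp (-(I * r * Θ t)) * exp (I * r * Θ t) = 1 := by rw [← exp_add]; simp
  have hr' : (r : ℂ) ≠ 0 := by exact_mod_cast hr
  have hc0' : (c t : ℂ) ≠ 0 := by exact_mod_cast hc0
  simp only [amplitude, ofReal_neg, neg_mul, neg_neg, mul_neg, div_neg]
  field_simp
  linear_combination
    (2 * w t) * h - (2 * w t * exp (-(I * r * Θ t)) * exp (I * r * Θ t)) * I_sq

theorem tendsto_sub_mul_exp_I_mul {l : Filter ℝ} {f : ℝ → ℂ} {a : ℂ} (hf : Tendsto f l (𝓝 a))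
    (ψ : ℝ → ℝ) : Tendsto (fun t => (f t - a) * exp (I * ψ t)) l (𝓝 0) := by
  refine squeeze_zero_norm (fun t => (norm_mul _ _).trans_le ?_)
    (tendsto_iff_norm_sub_tendsto_zero.1 hf)
  rw [norm_exp_I_mul_ofReal, mul_one]

theorem tendsto_sub_of_tendsto_amplitude {l : Filter ℝ} {r κ : ℝ} {c Θ : ℝ → ℝ} {v w : ℝ → ℂ}
    {a b : ℂ} (hr : r ≠ 0) (hc0 : ∀ t, c t ≠ 0) (hc : Tendsto c l (𝓝 κ))
    (ha : Tendsto (amplitude r c Θ v w) l (𝓝 a)) (hb : Tendsto (amplitude (-r) c Θ v w) l (𝓝 b)) :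
    Tendsto (fun t => v t - a * exp (I * r * Θ t) - b * exp (-(I * r * Θ t))) l (𝓝 0) ∧
    Tendsto (fun t => w t - I * r * c t * (a * exp (I * r * Θ t) - b * exp (-(I * r * Θ t))))
      l (𝓝 0) := by
  have hA := tendsto_sub_mul_exp_I_mul ha (fun t => r * Θ t)
  have hB := tendsto_sub_mul_exp_I_mul hb (fun t => -(r * Θ t))
  push_cast at hA hB
  simp only [← mul_assoc, mul_neg] at hA hB
  constructor
  · simpa using (hA.add hB).congr fun t => by
      rw [← amplitude_mul_exp_add r c Θ v w t]; ring
  · have hrc := (tendsto_const_nhds (x := I * r)).mul (continuous_ofReal.tendsto κ |>.comp hc)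
    simpa using (hrc.mul (hA.sub hB)).congr fun t => by
      simp only [Function.comp_apply]
      rw [← amplitude_mul_exp_sub Θ v w hr (hc0 t)]; ring

theorem exists_tendsto_amplitude {r K : ℝ} {c c' Θ g : ℝ → ℝ} {v w : ℝ → ℂ} (hr : r ≠ 0)
    (hc : ∀ t, HasDerivAt c (c' t) t) (hc0 : ∀ t, c t ≠ 0) (hΘ : ∀ t, HasDerivAt Θ (c t) t)
    (hv : ∀ t, HasDerivAt v (w t) t)
    (hw : ∀ t, HasDerivAt w (-((c t ^ 2 * r ^ 2 : ℝ) : ℂ) * v t) t)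
    (hg : Integrable g) (hcg : ∀ t, |c' t| / c t ^ 2 ≤ g t) (hK : ∀ t, ‖w t‖ ≤ K) :
    (∃ a, Tendsto (amplitude r c Θ v w) atTop (𝓝 a)) ∧
      ∃ b, Tendsto (amplitude r c Θ v w) atBot (𝓝 b) := by
  refine exists_tendsto_atTop_atBot_of_norm_deriv_le
    (fun t => hasDerivAt_amplitude hr (hc t) (hc0 t) (hΘ t) (hv t) (hw t))
    (hg.const_mul (K / (2 * |r|))) fun t => ?_
  have hg0 : 0 ≤ g t := (div_nonneg (abs_nonneg _) (sq_nonneg _)).trans (hcg t)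
  calc ‖I * c' t / (2 * r * c t ^ 2) * w t * exp (-(I * r * Θ t))‖
      = |c' t| / c t ^ 2 * ‖w t‖ / (2 * |r|) := by simp [norm_exp]; ring
    _ ≤ g t * K / (2 * |r|) := by gcongr; exacts [hcg t, hK t]
    _ = K / (2 * |r|) * g t := by ring

theorem exists_tendsto_amplitude_kirchhoff {γ : ℝ → ℝ} {r : ℝ} (hr : r ≠ 0)
    (hγpos : ∀ t, 0 ≤ γ t) (hγ : ContDiff ℝ 1 γ) (hγ' : Integrable (deriv γ)) {v w : ℝ → ℂ}
    (hv : ∀ t, HasDerivAt v (w t) t)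
    (hw : ∀ t, HasDerivAt w (-(((1 + γ t) * r ^ 2 : ℝ) : ℂ) * v t) t) :
    (∃ a, Tendsto (amplitude r (fun t => √(1 + γ t)) (fun t => ∫ s in (0 : ℝ)..t, √(1 + γ s)) v w)
      atTop (𝓝 a)) ∧
    ∃ b, Tendsto (amplitude r (fun t => √(1 + γ t)) (fun t => ∫ s in (0 : ℝ)..t, √(1 + γ s)) v w)
      atBot (𝓝 b) := by
  have hγ1 : ∀ t, 1 ≤ 1 + γ t := fun t => le_add_of_nonneg_right (hγpos t)
  have hc1 : ∀ t, 1 ≤ √(1 + γ t) := fun t => Real.one_le_sqrt.2 (hγ1 t)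
  have hc : ∀ t, HasDerivAt (fun t => √(1 + γ t)) (deriv γ t / (2 * √(1 + γ t))) t := fun t =>
    (((hγ.differentiable one_ne_zero) t).hasDerivAt.const_add 1).sqrt (by linarith [hγ1 t])
  have hΘ : ∀ t, HasDerivAt (fun t => ∫ s in (0 : ℝ)..t, √(1 + γ s)) (√(1 + γ t)) t := fun t =>
    ((continuous_const.add hγ.continuous).sqrt.integral_hasStrictDerivAt 0 t).hasDerivAt
  have hw' : ∀ t, HasDerivAt w (-((√(1 + γ t) ^ 2 * r ^ 2 : ℝ) : ℂ) * v t) t := fun t => by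
    rw [Real.sq_sqrt (by linarith [hγ1 t])]; exact hw t
  have hcg (t : ℝ) : |deriv γ t / (2 * √(1 + γ t))| / √(1 + γ t) ^ 2 ≤ |deriv γ t| / 2 := by
    have hc := hc1 t
    rw [abs_div, abs_of_pos (a := 2 * √(1 + γ t)) (by linarith), div_div]
    exact div_le_div_of_nonneg_left (abs_nonneg _) two_pos
      (by nlinarith [one_le_pow₀ (n := 2) hc])
  obtain ⟨K, hK⟩ := exists_forall_norm_le_of_kirchhoff hγpos hγ hγ' hv hw
  exact exists_tendsto_amplitude hr hc (fun t => by linarith [hc1 t]) hΘ hv hw'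
    (hγ'.abs.div_const 2) hcg hK

/-- Asymptotic integration for the Fourier-transformed Kirchhoff-type equation
(`m = 2` case): if `v'' + c(t)² r² v = 0` with `c(t)² = 1 + γ(t)`, where `γ ≥ 0` is `C¹`,
bounded, `γ(t) → γ_±` as `t → ±∞` and `γ' ∈ L¹(ℝ)`, and `r > 0`, then there are constants
`a_±, b_± ∈ ℂ` such that, with `θ(t) = r ∫_0^t c(s) ds`,
`v(t) - a_± e^{iθ(t)} - b_± e^{-iθ(t)} → 0` and
`v'(t) - i r c(t)(a_± e^{iθ(t)} - b_± e^{-iθ(t)}) → 0` as `t → ±∞`. -/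
theorem asymptotic_integration_m2 (γ : ℝ → ℝ) (γp γm : ℝ) (r : ℝ) (hr : 0 < r)
    (hγpos : ∀ t, 0 ≤ γ t) (hγ : ContDiff ℝ 1 γ)
    (hγp : Tendsto γ atTop (nhds γp)) (hγm : Tendsto γ atBot (nhds γm))
    (hγ' : Integrable (deriv γ))
    (v w : ℝ → ℂ)
    (hv : ∀ t, HasDerivAt v (w t) t)
    (hw : ∀ t, HasDerivAt w (-(((1 + γ t) * r ^ 2 : ℝ) : ℂ) * v t) t) :
    (∃ a b : ℂ,
      Tendsto (fun t =>
          v t - a * Complex.exp (Complex.I * r * ((∫ s in (0:ℝ)..t, Real.sqrt (1 + γ s) : ℝ) : ℂ))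
              - b * Complex.exp (-(Complex.I * r * ((∫ s in (0:ℝ)..t, Real.sqrt (1 + γ s) : ℝ) : ℂ))))
        atTop (nhds 0) ∧
      Tendsto (fun t =>
          w t - Complex.I * r * (Real.sqrt (1 + γ t) : ℂ) *
            (a * Complex.exp (Complex.I * r * ((∫ s in (0:ℝ)..t, Real.sqrt (1 + γ s) : ℝ) : ℂ))
              - b * Complex.exp (-(Complex.I * r * ((∫ s in (0:ℝ)..t, Real.sqrt (1 + γ s) : ℝ) : ℂ)))))
        atTop (nhds 0)) ∧
    (∃ a b : ℂ,
      Tendsto (fun t =>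
          v t - a * Complex.exp (Complex.I * r * ((∫ s in (0:ℝ)..t, Real.sqrt (1 + γ s) : ℝ) : ℂ))
              - b * Complex.exp (-(Complex.I * r * ((∫ s in (0:ℝ)..t, Real.sqrt (1 + γ s) : ℝ) : ℂ))))
        atBot (nhds 0) ∧
      Tendsto (fun t =>
          w t - Complex.I * r * (Real.sqrt (1 + γ t) : ℂ) *
            (a * Complex.exp (Complex.I * r * ((∫ s in (0:ℝ)..t, Real.sqrt (1 + γ s) : ℝ) : ℂ))
              - b * Complex.exp (-(Complex.I * r * ((∫ s in (0:ℝ)..t, Real.sqrt (1 + γ s) : ℝ) : ℂ)))))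
        atBot (nhds 0)) := by
  have hr0 : r ≠ 0 := hr.ne'
  have hc0 : ∀ t, √(1 + γ t) ≠ 0 := fun t => (Real.sqrt_pos.2 (by linarith [hγpos t])).ne'
  obtain ⟨⟨ap, hap⟩, am, ham⟩ := exists_tendsto_amplitude_kirchhoff hr0 hγpos hγ hγ' hv hw
  obtain ⟨⟨bp, hbp⟩, bm, hbm⟩ :=
    exists_tendsto_amplitude_kirchhoff (neg_ne_zero.2 hr0) hγpos hγ hγ' hv (by simpa using hw)
  exact ⟨⟨ap, bp, tendsto_sub_of_tendsto_amplitude hr0 hc0 (hγp.const_add 1).sqrt hap hbp⟩,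
    am, bm, tendsto_sub_of_tendsto_amplitude hr0 hc0 (hγm.const_add 1).sqrt ham hbm⟩
end
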